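/- Let u be upper semicontinuous on an open set Ω ⊆ ℝⁿ and suppose u enjoys comparison with cones from above in Ω. Then for each x ∈ Ω the function r ↦ (max_{|y - x| = r} u(y) - u(x))/r is nondecreasing on the interval of r > 0 with closed ball B̄_r(x) ⊆ Ω. -/

import Mathlib

/-!
Let `M(ρ) = max_{∂B_ρ(x)} u` and `b = (M(s) - u(x))/s`. The cone `y ↦ u(x) + b|y - x|` dominates
`u` on the frontier of `B_s(x) \ {x}`: at the vertex `x` trivially, and on the sphere `∂B_s(x)`
because it equals `M(s)` there. Comparison with cones gives `u ≤ u(x) + b|y - x|` on `B_s(x)`, so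
`M(r) ≤ u(x) + b r` for `r < s`, which is the claimed inequality.
-/

open Metric

/-- `u` enjoys comparison with cones from above in `Ω`: for every bounded open `V` with
`V̄ ⊆ Ω`, every vertex `z` and constants `a, b`, if `u ≤ a + b|· - z|` on `∂(V \ {z})`,
then the same holds on `V`. -/
def CompConesAbove {n : ℕ} (Ω : Set (EuclideanSpace ℝ (Fin n)))
    (u : EuclideanSpace ℝ (Fin n) → ℝ) : Prop :=
  ∀ V : Set (EuclideanSpace ℝ (Fin n)), IsOpen V → Bornology.IsBounded V → closure V ⊆ Ω →
    ∀ z : EuclideanSpace ℝ (Fin n), ∀ a b : ℝ,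
      (∀ y ∈ frontier (V \ {z}), u y ≤ a + b * ‖y - z‖) →
      ∀ y ∈ V, u y ≤ a + b * ‖y - z‖

open Set

lemma frontier_ball_diff_singleton_subset {X : Type*} [MetricSpace X] (x : X) (ε : ℝ) :
    frontier (ball x ε \ {x}) ⊆ sphere x ε ∪ {x} := by
  rw [sdiff_eq]
  refine (frontier_inter_subset _ _).trans (union_subset_union ?_ ?_)
  · exact inter_subset_left.trans frontier_ball_subset_sphere
  · rw [frontier_compl]
    exact inter_subset_right.trans (frontier_subset_closure.trans closure_singleton.subset)

theorem CompConesAbove.le_cone_of_le_on_sphere {n : ℕ} {Ω : Set (EuclideanSpace ℝ (Fin n))}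
    {u : EuclideanSpace ℝ (Fin n) → ℝ} (hu : CompConesAbove Ω u) {x : EuclideanSpace ℝ (Fin n)}
    {s b : ℝ} (hs : 0 < s) (hball : closedBall x s ⊆ Ω)
    (hsphere : ∀ y ∈ sphere x s, u y ≤ u x + b * s) :
    ∀ y ∈ ball x s, u y ≤ u x + b * ‖y - x‖ := by
  refine hu (ball x s) isOpen_ball isBounded_ball ((closure_ball x hs.ne').trans_subset hball)
    x (u x) b fun y hy => ?_
  rcases frontier_ball_diff_singleton_subset x s hy with hy | rfl
  · rw [← dist_eq_norm, mem_sphere.mp hy]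
    exact hsphere y hy
  · simp

theorem stmt4_general {n : ℕ} (hn : 0 < n) (Ω : Set (EuclideanSpace ℝ (Fin n)))
    (u : EuclideanSpace ℝ (Fin n) → ℝ) (husc : UpperSemicontinuousOn u Ω)
    (hcca : CompConesAbove Ω u) (x : EuclideanSpace ℝ (Fin n)) :
    ∀ r s : ℝ, 0 < r → r ≤ s → closedBall x s ⊆ Ω →
      (sSup (u '' sphere x r) - u x) / r ≤ (sSup (u '' sphere x s) - u x) / s := by
  intro r s hr hrs hball
  obtain rfl | hlt := hrs.eq_or_lt
  · rfl
  have hs : 0 < s := hr.trans hlt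
  have : Nontrivial (EuclideanSpace ℝ (Fin n)) :=
    Module.nontrivial_of_finrank_pos (R := ℝ) (by rwa [finrank_euclideanSpace_fin])
  set b := (sSup (u '' sphere x s) - u x) / s
  have hbs : u x + b * s = sSup (u '' sphere x s) := by
    simp only [b, div_mul_cancel₀ _ hs.ne']; ring
  have hbdd : BddAbove (u '' sphere x s) :=
    (husc.mono (sphere_subset_closedBall.trans hball)).bddAbove_of_isCompact (isCompact_sphere x s)
  have hcone := hcca.le_cone_of_le_on_sphere hs hball (b := b) fun y hy =>
    hbs ▸ le_csSup hbdd (mem_image_of_mem u hy)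
  have hMr : sSup (u '' sphere x r) ≤ u x + b * r := by
    refine csSup_le ((NormedSpace.sphere_nonempty.mpr hr.le).image u) ?_
    rintro _ ⟨y, hy, rfl⟩
    have hyr : ‖y - x‖ = r := by rw [← dist_eq_norm, mem_sphere.mp hy]
    exact hyr ▸ hcone y (mem_ball.mpr (by rwa [mem_sphere.mp hy]))
  rw [div_le_iff₀ hr]
  linarith

/-- For `u` upper semicontinuous enjoying comparison with cones from above, the quotient
`r ↦ (max_{∂B_r(x)} u - u(x))/r` is nondecreasing in `r` on `{r > 0 : B̄_r(x) ⊆ Ω}`. -/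
theorem stmt4 {n : ℕ} (hn : 0 < n) (Ω : Set (EuclideanSpace ℝ (Fin n))) (hΩ : IsOpen Ω)
    (u : EuclideanSpace ℝ (Fin n) → ℝ) (husc : UpperSemicontinuousOn u Ω)
    (hcca : CompConesAbove Ω u) (x : EuclideanSpace ℝ (Fin n)) (hx : x ∈ Ω) :
    ∀ r s : ℝ, 0 < r → r ≤ s → closedBall x s ⊆ Ω →
      (sSup (u '' sphere x r) - u x) / r ≤ (sSup (u '' sphere x s) - u x) / s :=
  stmt4_general hn Ω u husc hcca x
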